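/- Let F be an AL-RNN and let s be a sign pattern such that the matrix A + W·D_s, viewed as a complex matrix, has no eigenvalue of absolute value 1. Let z_n = F^n(z_0) be an orbit that is bounded and satisfies z_n ∈ U_s for all n ≥ N for some N. Then the affine map G_s(z) = (A + W·D_s) z + h has a unique fixed point z* = (I − A − W·D_s)⁻¹ h, the orbit converges to z*, and z* is a fixed point of F, i.e., F(z*) = z*. -/

import Mathlib

open Matrix Filter Topology

/-!
On the closed subregion of `s` the AL-RNN coincides with the affine map `G_s w = B w + h`,
`B = A + W D_s`. As `1` is not an eigenvalue of `B`, `G_s` has the unique fixed point `z*`, and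
once the orbit stays in `U_s` its error `z (N + k) - z*` is the `B`-orbit `B ^ k (z N - z*)`,
which is bounded. Over `ℂ`, the vectors with bounded `B`-orbit form a `B`-invariant subspace on
which every eigenvalue has modulus `≤ 1`, hence `< 1`. On a generalized eigenspace of such an
eigenvalue `μ`, `B ^ k = ∑ j, C(k, j) μ ^ (k - j) (B - μ) ^ j` is a sum of a fixed number of terms
tending to `0`, so the error tends to `0`. Finally `z*`, a limit of points of the closed
subregion, satisfies `F z* = G_s z* = z*`.
-/

/-- `Φ*`: identity on the first `M − P` coordinates, ReLU on the last `P` coordinates. -/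
noncomputable def phiStar (M P : ℕ) (z : Fin M → ℝ) : Fin M → ℝ :=
  fun j => if (j : ℕ) < M - P then z j else max 0 (z j)

/-- The AL-RNN map `F(z) = A z + W Φ*(z) + h`. -/
noncomputable def alrnn (M P : ℕ) (A W : Matrix (Fin M) (Fin M) ℝ) (h : Fin M → ℝ)
    (z : Fin M → ℝ) : Fin M → ℝ :=
  A.mulVec z + W.mulVec (phiStar M P z) + h

/-- The diagonal matrix `D_s` attached to a sign pattern `s : Fin P → Fin 2`: its first
`M − P` diagonal entries are `1` and the `(M − P + i)`-th diagonal entry is `s i`. -/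
noncomputable def signDiag (M P : ℕ) (s : Fin P → Fin 2) : Matrix (Fin M) (Fin M) ℝ :=
  Matrix.diagonal fun j =>
    if (j : ℕ) < M - P then 1
    else if hj : (j : ℕ) - (M - P) < P then ((s ⟨(j : ℕ) - (M - P), hj⟩ : ℕ) : ℝ) else 0

/-- The open linear subregion `U_s`: the `(M − P + i)`-th coordinate is `> 0` if
`s i = 1` and `< 0` if `s i = 0`. -/
def regionOpen (M P : ℕ) (hPM : P ≤ M) (s : Fin P → Fin 2) : Set (Fin M → ℝ) :=
  { z | ∀ i : Fin P,
      if s i = 1 then 0 < z ⟨M - P + (i : ℕ), by omega⟩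
      else z ⟨M - P + (i : ℕ), by omega⟩ < 0 }

/-- The closed linear subregion: the sign conditions of `s` hold non-strictly. -/
def regionClosed (M P : ℕ) (hPM : P ≤ M) (s : Fin P → Fin 2) : Set (Fin M → ℝ) :=
  { z | ∀ i : Fin P,
      if s i = 1 then 0 ≤ z ⟨M - P + (i : ℕ), by omega⟩
      else z ⟨M - P + (i : ℕ), by omega⟩ ≤ 0 }

theorem Module.End.pow_apply_eq_sum_choose {R V : Type*} [CommRing R] [AddCommGroup V]
    [Module R V] (T : Module.End R V) (μ : R) (x : V) (n : ℕ) :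
    (T ^ n) x = ∑ j ∈ Finset.range (n + 1),
      ((n.choose j : R) * μ ^ (n - j)) • ((T - μ • 1) ^ j) x := by
  have hcomm : Commute (T - μ • 1) (μ • 1) := (Commute.one_right _).smul_right μ
  conv_lhs => rw [← sub_add_cancel T (μ • 1), hcomm.add_pow, LinearMap.sum_apply]
  refine Finset.sum_congr rfl fun j _ => ?_
  rw [smul_pow, one_pow, mul_smul_one, ← Nat.cast_comm, Module.End.mul_apply,
    LinearMap.smul_apply, Module.End.natCast_apply, mul_smul, Nat.cast_smul_eq_nsmul]

theorem tendsto_choose_mul_pow_sub {R : Type*} [NormedRing R] [HasSummableGeomSeries R]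
    {μ : R} (hμ : ‖μ‖ < 1) (j : ℕ) :
    Tendsto (fun n => (n.choose j : R) * μ ^ (n - j)) atTop (𝓝 0) := by
  rw [← tendsto_add_atTop_iff_nat j]
  simpa using (summable_choose_mul_geometric_of_norm_lt_one j hμ).tendsto_atTop_zero

namespace Module.End

variable {𝕜 V : Type*} [NormedField 𝕜] [NormedAddCommGroup V] [NormedSpace 𝕜 V]

theorem tendsto_pow_apply_of_mem_maxGenEigenspace [HasSummableGeomSeries 𝕜]
    (T : Module.End 𝕜 V) {μ : 𝕜} (hμ : ‖μ‖ < 1) {x : V} (hx : x ∈ T.maxGenEigenspace μ) :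
    Tendsto (fun n => (T ^ n) x) atTop (𝓝 0) := by
  obtain ⟨k, hk⟩ := (T.mem_maxGenEigenspace μ x).1 hx
  have hvanish : ∀ j ≥ k, ((T - μ • 1) ^ j) x = 0 := fun j hj => by
    rw [← Nat.sub_add_cancel hj, pow_add, mul_apply, hk, map_zero]
  have hsum : ∀ n ≥ k, (T ^ n) x = ∑ j ∈ Finset.range k,
      ((n.choose j : 𝕜) * μ ^ (n - j)) • ((T - μ • 1) ^ j) x := fun n hn => by
    rw [pow_apply_eq_sum_choose T μ]
    refine (Finset.sum_subset (Finset.range_subset_range.2 (by omega)) fun j _ hj => ?_).symm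
    rw [hvanish j (by simpa using hj), smul_zero]
  have hlim := tendsto_finsetSum (Finset.range k) fun j _ =>
    (tendsto_choose_mul_pow_sub hμ j).smul_const (((T - μ • 1) ^ j) x)
  simp only [zero_smul, Finset.sum_const_zero] at hlim
  exact hlim.congr' (eventually_atTop.2 ⟨k, fun n hn => (hsum n hn).symm⟩)

theorem tendsto_pow_apply_of_hasEigenvalue_norm_lt_one [IsAlgClosed 𝕜] [HasSummableGeomSeries 𝕜]
    [FiniteDimensional 𝕜 V] (T : Module.End 𝕜 V) (hT : ∀ μ, T.HasEigenvalue μ → ‖μ‖ < 1)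
    (x : V) : Tendsto (fun n => (T ^ n) x) atTop (𝓝 0) := by
  have hx : x ∈ ⨆ μ, T.maxGenEigenspace μ := by
    rw [iSup_maxGenEigenspace_eq_top]; trivial
  induction hx using Submodule.iSup_induction' with
  | mem μ y hy =>
    by_cases hy0 : y = 0
    · simp [hy0]
    refine T.tendsto_pow_apply_of_mem_maxGenEigenspace (hT μ ?_) hy
    obtain ⟨k, hk⟩ := (T.mem_maxGenEigenspace μ y).1 hy
    exact hasEigenvalue_of_hasGenEigenvalue (k := k) fun hbot => hy0 <| by
      simpa [hbot] using (mem_genEigenspace_nat.2 hk : y ∈ T.genEigenspace μ k)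
  | zero => simp
  | add y₁ y₂ _ _ h₁ h₂ => simpa using h₁.add h₂

def boundedOrbitSubmodule (T : Module.End 𝕜 V) : Submodule 𝕜 V where
  carrier := {x | ∃ C, ∀ n, ‖(T ^ n) x‖ ≤ C}
  zero_mem' := ⟨0, by simp⟩
  add_mem' := by
    rintro x y ⟨Cx, hx⟩ ⟨Cy, hy⟩
    exact ⟨Cx + Cy, fun n => by
      rw [map_add]; exact (norm_add_le _ _).trans (add_le_add (hx n) (hy n))⟩
  smul_mem' := by
    rintro a x ⟨C, hx⟩
    exact ⟨‖a‖ * C, fun n => by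
      rw [map_smul, norm_smul]; exact mul_le_mul_of_nonneg_left (hx n) (norm_nonneg a)⟩

theorem apply_mem_boundedOrbitSubmodule (T : Module.End 𝕜 V) {x : V}
    (hx : x ∈ T.boundedOrbitSubmodule) : T x ∈ T.boundedOrbitSubmodule := by
  obtain ⟨C, hC⟩ := hx
  exact ⟨C, fun n => by simpa [pow_succ, mul_apply] using hC (n + 1)⟩

theorem HasEigenvector.norm_le_one_of_mem_boundedOrbitSubmodule {T : Module.End 𝕜 V} {μ : 𝕜}
    {x : V} (hμ : T.HasEigenvector μ x) (hx : x ∈ T.boundedOrbitSubmodule) : ‖μ‖ ≤ 1 := by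
  obtain ⟨C, hC⟩ := hx
  have hx0 : 0 < ‖x‖ := norm_pos_iff.2 hμ.2
  by_contra! hμ1
  obtain ⟨n, hn⟩ := pow_unbounded_of_one_lt (C / ‖x‖) hμ1
  have := hC n
  rw [hμ.pow_apply, norm_smul, norm_pow, ← le_div_iff₀ hx0] at this
  linarith

theorem tendsto_pow_apply_of_isBounded [IsAlgClosed 𝕜] [HasSummableGeomSeries 𝕜]
    [FiniteDimensional 𝕜 V] (T : Module.End 𝕜 V) (hT : ∀ μ, T.HasEigenvalue μ → ‖μ‖ ≠ 1)
    {x : V} (hx : Bornology.IsBounded (Set.range fun n => (T ^ n) x)) :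
    Tendsto (fun n => (T ^ n) x) atTop (𝓝 0) := by
  set U := T.boundedOrbitSubmodule
  have hxU : x ∈ U := by
    obtain ⟨C, hC⟩ := isBounded_iff_forall_norm_le.1 hx
    exact ⟨C, fun n => hC _ ⟨n, rfl⟩⟩
  let g : Module.End 𝕜 U := T.restrict fun y (hy : y ∈ U) => T.apply_mem_boundedOrbitSubmodule hy
  have hg : ∀ μ, g.HasEigenvalue μ → ‖μ‖ < 1 := fun μ hμ => by
    obtain ⟨y, hy⟩ := hμ.exists_hasEigenvector
    have hTy : T.HasEigenvector μ y :=
      ⟨mem_eigenspace_iff.2 (congrArg Subtype.val hy.apply_eq_smul), by simpa using hy.2⟩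
    exact (hTy.norm_le_one_of_mem_boundedOrbitSubmodule y.2).lt_of_ne
      (hT μ (hasEigenvalue_of_hasEigenvector hTy))
  have := (continuous_subtype_val.tendsto 0).comp
    (g.tendsto_pow_apply_of_hasEigenvalue_norm_lt_one hg ⟨x, hxU⟩)
  refine this.congr fun n => ?_
  rw [Function.comp_apply, pow_restrict]
  rfl

end Module.End

namespace Matrix

variable {n : Type*} [Fintype n] [DecidableEq n]

theorem mulVec_add_eq_self_iff {R : Type*} [CommRing R] {B : Matrix n n R}
    (hB : IsUnit (1 - B).det) (h w : n → R) : B *ᵥ w + h = w ↔ w = (1 - B)⁻¹ *ᵥ h := by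
  rw [show B *ᵥ w + h = w ↔ (1 - B) *ᵥ w = h by
    rw [sub_mulVec, one_mulVec, sub_eq_iff_eq_add', eq_comm]]
  constructor
  · rintro rfl
    rw [mulVec_mulVec, nonsing_inv_mul _ hB, one_mulVec]
  · rintro rfl
    rw [mulVec_mulVec, mul_nonsing_inv _ hB, one_mulVec]

theorem sub_fixedPoint_eq_pow_mulVec {R : Type*} [CommRing R] {B : Matrix n n R} {h zs : n → R}
    (hfix : B *ᵥ zs + h = zs) {z : ℕ → n → R} (hz : ∀ k, z (k + 1) = B *ᵥ z k + h) (k : ℕ) :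
    z k - zs = (B ^ k) *ᵥ (z 0 - zs) := by
  induction k with
  | zero => simp
  | succ k ih =>
    rw [hz, pow_succ', ← mulVec_mulVec, ← ih, mulVec_sub]
    conv_lhs => rw [← hfix]
    abel

theorem isUnit_det_one_sub_of_one_notMem_spectrum (B : Matrix n n ℝ)
    (hB : (1 : ℂ) ∉ spectrum ℂ (B.map Complex.ofReal)) : IsUnit (1 - B).det := by
  rw [spectrum.mem_iff, map_one, not_not, isUnit_iff_isUnit_det] at hB
  have hmap : 1 - B.map Complex.ofReal = Complex.ofRealHom.mapMatrix (1 - B) := by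
    rw [map_sub, map_one]; rfl
  rw [hmap, ← RingHom.map_det, isUnit_iff_ne_zero] at hB
  exact isUnit_iff_ne_zero.2 fun h0 => hB (by simp [h0])

theorem tendsto_pow_mulVec_of_isBounded (B : Matrix n n ℝ)
    (hB : ∀ μ ∈ spectrum ℂ (B.map Complex.ofReal), ‖μ‖ ≠ 1) {v : n → ℝ}
    (hv : Bornology.IsBounded (Set.range fun k => (B ^ k) *ᵥ v)) :
    Tendsto (fun k => (B ^ k) *ᵥ v) atTop (𝓝 0) := by
  set T : Module.End ℂ (n → ℂ) := toLin' (B.map Complex.ofReal)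
  have hT : ∀ μ, T.HasEigenvalue μ → ‖μ‖ ≠ 1 := fun μ hμ =>
    hB μ (by rwa [Module.End.hasEigenvalue_iff_mem_spectrum, spectrum_toLin'] at hμ)
  have horbit : ∀ k, (T ^ k) (Complex.ofReal ∘ v) = Complex.ofReal ∘ ((B ^ k) *ᵥ v) :=
    fun k => funext fun i => by
      rw [← toLin'_pow, toLin'_apply]
      have := (RingHom.map_mulVec Complex.ofRealHom (B ^ k) v i).symm
      rw [Matrix.map_pow] at this
      exact this
  have hbdd : Bornology.IsBounded (Set.range fun k => (T ^ k) (Complex.ofReal ∘ v)) := by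
    obtain ⟨C, hC⟩ := isBounded_iff_forall_norm_le.1 hv
    refine isBounded_iff_forall_norm_le.2 ⟨C, ?_⟩
    rintro _ ⟨k, rfl⟩
    simpa [horbit, Pi.norm_def] using hC _ ⟨k, rfl⟩
  have hre : Continuous fun u : n → ℂ => fun i => (u i).re := by fun_prop
  have hlim := T.tendsto_pow_apply_of_isBounded hT hbdd
  simp only [horbit] at hlim
  have := (hre.tendsto 0).comp hlim
  simp only [Function.comp_def, Complex.ofReal_re, Pi.zero_apply, Complex.zero_re] at this
  exact this

end Matrix

section ALRNN

variable {M P : ℕ} {hPM : P ≤ M} {s : Fin P → Fin 2}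

theorem regionOpen_subset_regionClosed : regionOpen M P hPM s ⊆ regionClosed M P hPM s :=
  fun z hz i => by
    have := hz i
    split_ifs at this ⊢ <;> exact this.le

theorem isClosed_regionClosed : IsClosed (regionClosed M P hPM s) := by
  simp only [regionClosed, Set.ofPred_forall]
  refine isClosed_iInter fun i => ?_
  split_ifs
  · exact isClosed_le continuous_const (continuous_apply _)
  · exact isClosed_le (continuous_apply _) continuous_const

theorem phiStar_eq_signDiag_mulVec {z : Fin M → ℝ} (hz : z ∈ regionClosed M P hPM s) :
    phiStar M P z = signDiag M P s *ᵥ z := by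
  funext j
  rw [signDiag, mulVec_diagonal, phiStar]
  by_cases hj : (j : ℕ) < M - P
  · simp [hj]
  have hi : (j : ℕ) - (M - P) < P := by omega
  have hzj := hz ⟨_, hi⟩
  rw [show (⟨M - P + (j - (M - P)), by omega⟩ : Fin M) = j from
    Fin.ext (Nat.add_sub_cancel' (by omega))] at hzj
  simp only [if_neg hj, dif_pos hi]
  generalize s ⟨_, hi⟩ = b at hzj ⊢
  fin_cases b
  · simp [max_eq_left (hzj : z j ≤ 0)]
  · simp [max_eq_right (hzj : 0 ≤ z j)]

theorem alrnn_eq_of_mem_regionClosed (A W : Matrix (Fin M) (Fin M) ℝ) (h : Fin M → ℝ)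
    {z : Fin M → ℝ} (hz : z ∈ regionClosed M P hPM s) :
    alrnn M P A W h z = (A + W * signDiag M P s) *ᵥ z + h := by
  rw [alrnn, phiStar_eq_signDiag_mulVec hz, mulVec_mulVec, add_mulVec]

end ALRNN

theorem stmt1_general (M P : ℕ) (hPM : P ≤ M)
    (A W : Matrix (Fin M) (Fin M) ℝ) (h : Fin M → ℝ)
    (s : Fin P → Fin 2)
    (hhyp : ∀ μ ∈ spectrum ℂ (((A + W * signDiag M P s)).map Complex.ofReal),
      ‖μ‖ ≠ 1)
    (z : ℕ → Fin M → ℝ) (horb : ∀ n : ℕ, z (n + 1) = alrnn M P A W h (z n))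
    (hbdd : Bornology.IsBounded (Set.range z))
    (N : ℕ) (hreg : ∀ n ≥ N, z n ∈ regionOpen M P hPM s) :
    ∀ zs : Fin M → ℝ, zs = (1 - (A + W * signDiag M P s))⁻¹.mulVec h →
      ((A + W * signDiag M P s).mulVec zs + h = zs ∧
        (∀ w : Fin M → ℝ, (A + W * signDiag M P s).mulVec w + h = w → w = zs) ∧
        Tendsto z atTop (𝓝 zs) ∧
        alrnn M P A W h zs = zs) := by
  intro zs hzs
  set B := A + W * signDiag M P s
  have hdet : IsUnit (1 - B).det :=
    B.isUnit_det_one_sub_of_one_notMem_spectrum fun h1 => hhyp 1 h1 norm_one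
  have hfix : B *ᵥ zs + h = zs := (mulVec_add_eq_self_iff hdet h zs).2 hzs
  have hclosed : ∀ n ≥ N, z n ∈ regionClosed M P hPM s :=
    fun n hn => regionOpen_subset_regionClosed (hreg n hn)
  have herr : ∀ k, z (N + k) - zs = (B ^ k) *ᵥ (z N - zs) :=
    sub_fixedPoint_eq_pow_mulVec hfix (z := fun k => z (N + k)) fun k => by
      rw [← add_assoc, horb, alrnn_eq_of_mem_regionClosed A W h (hclosed _ (N.le_add_right k))]
  have hlim : Tendsto z atTop (𝓝 zs) := by
    have hbdd' : Bornology.IsBounded (Set.range fun k => (B ^ k) *ᵥ (z N - zs)) :=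
      (hbdd.sub (Bornology.isBounded_singleton (x := zs))).subset <| by
        rintro _ ⟨k, rfl⟩
        exact ⟨z (N + k), ⟨N + k, rfl⟩, zs, rfl, herr k⟩
    have := B.tendsto_pow_mulVec_of_isBounded hhyp hbdd'
    simp only [← herr, tendsto_sub_nhds_zero_iff] at this
    exact (tendsto_add_atTop_iff_nat N).1 (by simpa only [add_comm] using this)
  have hmem : zs ∈ regionClosed M P hPM s :=
    isClosed_regionClosed.mem_of_tendsto hlim (eventually_atTop.2 ⟨N, hclosed⟩)
  exact ⟨hfix, fun w hw => hzs ▸ (mulVec_add_eq_self_iff hdet h w).1 hw, hlim,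
    (alrnn_eq_of_mem_regionClosed A W h hmem).trans hfix⟩

/-- If an orbit of an AL-RNN is bounded and eventually stays in a single
open subregion `U_s` whose matrix `A + W·D_s` has no complex eigenvalue of absolute value
1, then the affine map `G_s(w) = (A + W·D_s) w + h` has the unique fixed point
`z* = (I − A − W·D_s)⁻¹ h`, the orbit converges to `z*`, and `z*` is a fixed point of the
AL-RNN itself. -/
theorem stmt1 (M P : ℕ) (hM : 1 ≤ M) (hP : 1 ≤ P) (hPM : P ≤ M)
    (A W : Matrix (Fin M) (Fin M) ℝ) (hA : A.IsDiag) (h : Fin M → ℝ)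
    (s : Fin P → Fin 2)
    (hhyp : ∀ μ ∈ spectrum ℂ (((A + W * signDiag M P s)).map Complex.ofReal),
      ‖μ‖ ≠ 1)
    (z : ℕ → Fin M → ℝ) (horb : ∀ n : ℕ, z (n + 1) = alrnn M P A W h (z n))
    (hbdd : Bornology.IsBounded (Set.range z))
    (N : ℕ) (hreg : ∀ n ≥ N, z n ∈ regionOpen M P hPM s) :
    ∀ zs : Fin M → ℝ, zs = (1 - (A + W * signDiag M P s))⁻¹.mulVec h →
      ((A + W * signDiag M P s).mulVec zs + h = zs ∧
        (∀ w : Fin M → ℝ, (A + W * signDiag M P s).mulVec w + h = w → w = zs) ∧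
        Tendsto z atTop (𝓝 zs) ∧
        alrnn M P A W h zs = zs) :=
  stmt1_general M P hPM A W h s hhyp z horb hbdd N hreg
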